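/- Let p(n) denote the number of partitions of n and σ(m) the sum of divisors of m. Then for n ≥ 1, n · p(n) = Σ_{m=1}^{n} σ(m) p(n − m). -/

import Mathlib

/-!
Count each partition of `n` with weight `n = ∑ d, d * m_d`, where `m_d` is the number of
parts equal to `d`. Deleting `j` copies of `d` matches the partitions with `m_d ≥ j` with the
partitions of `n - d * j`, so summing `m_d` over all partitions of `n` gives
`∑ j ≥ 1, p (n - d * j)`. Hence
`n * p n = ∑ d, ∑ j, d * p (n - d * j)`, and grouping the terms by `m = d * j` gives
`∑ m, σ m * p (n - m)`.
-/

open Finset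

theorem Finset.sum_eq_sum_Icc_card_filter_le {ι : Type*} (s : Finset ι) (f : ι → ℕ)
    {N : ℕ} (hf : ∀ i ∈ s, f i ≤ N) :
    ∑ i ∈ s, f i = ∑ j ∈ Icc 1 N, #{i ∈ s | j ≤ f i} := by
  simp_rw [card_filter]
  rw [sum_comm]
  refine sum_congr rfl fun i hi => ?_
  have hIcc : {j ∈ Icc 1 N | j ≤ f i} = Icc 1 (f i) := by
    ext j
    simp only [mem_filter, mem_Icc]
    have := hf i hi
    omega
  rw [← card_filter, hIcc, Nat.card_Icc, Nat.add_sub_cancel]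

theorem Nat.sum_Icc_sum_divisors {M : Type*} [AddCommMonoid M] (n : ℕ) (f : ℕ → ℕ → M) :
    ∑ m ∈ Icc 1 n, ∑ d ∈ m.divisors, f d m =
      ∑ d ∈ Icc 1 n, ∑ j ∈ Icc 1 (n / d), f d (d * j) := by
  rw [sum_comm' (t' := Icc 1 n) (s' := fun d => {m ∈ Icc 1 n | d ∣ m})]
  · refine sum_congr rfl fun d hd => ?_
    have hd0 : 0 < d := (mem_Icc.mp hd).1
    have hmultiples : {m ∈ Icc 1 n | d ∣ m} = (Icc 1 (n / d)).image (d * ·) := by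
      ext m
      simp only [mem_filter, mem_Icc, mem_image, Nat.le_div_iff_mul_le hd0]
      constructor
      · rintro ⟨⟨h1, h2⟩, j, rfl⟩
        exact ⟨j, ⟨Nat.pos_of_mul_pos_left h1, by rwa [mul_comm]⟩, rfl⟩
      · rintro ⟨j, ⟨h1, h2⟩, rfl⟩
        exact ⟨⟨Nat.mul_pos hd0 h1, by rwa [mul_comm]⟩, dvd_mul_right d j⟩
    rw [hmultiples, sum_image fun i _ j _ h => Nat.eq_of_mul_eq_mul_left hd0 h]
  · intro m d
    simp only [mem_Icc, Nat.mem_divisors, mem_filter]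
    constructor
    · rintro ⟨⟨h1, h2⟩, hdm, -⟩
      exact ⟨⟨⟨h1, h2⟩, hdm⟩, Nat.pos_of_dvd_of_pos hdm h1,
        (Nat.le_of_dvd h1 hdm).trans h2⟩
    · rintro ⟨⟨⟨h1, h2⟩, hdm⟩, -⟩
      exact ⟨⟨h1, h2⟩, hdm, by omega⟩

namespace Nat.Partition

def partitionWithCountGeEquiv {n d j : ℕ} (hd : 0 < d) (hj : d * j ≤ n) :
    {p : n.Partition // j ≤ p.parts.count d} ≃ (n - d * j).Partition where
  toFun p := by
    have hle := Multiset.le_count_iff_replicate_le.mp p.2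
    refine ⟨p.1.parts - .replicate j d,
      fun hi => p.1.parts_pos (Multiset.mem_of_le (Multiset.sub_le_self _ _) hi), ?_⟩
    have := congrArg Multiset.sum (tsub_add_cancel_of_le hle)
    rw [Multiset.sum_add, Multiset.sum_replicate, p.1.parts_sum, smul_eq_mul] at this
    lia
  invFun q :=
    ⟨⟨q.parts + .replicate j d, by grind [Multiset.eq_of_mem_replicate, q.parts_pos],
      by simp [q.parts_sum, mul_comm j d]; lia⟩,
      by simp⟩
  left_inv p := Subtype.ext <| Partition.ext <|
    tsub_add_cancel_of_le (Multiset.le_count_iff_replicate_le.mp p.2)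
  right_inv q := Partition.ext <| add_tsub_cancel_right _ _

theorem card_filter_le_count {n d j : ℕ} (hd : 0 < d) (hj : d * j ≤ n) :
    #{p : n.Partition | j ≤ p.parts.count d} = Fintype.card (n - d * j).Partition := by
  rw [← Fintype.card_subtype]
  exact Fintype.card_congr (partitionWithCountGeEquiv hd hj)

theorem sum_count_mul_eq {n : ℕ} (p : n.Partition) :
    ∑ i ∈ Icc 1 n, p.parts.count i * i = n := by
  refine Eq.trans ?_ p.parts_sum
  refine (Finset.sum_multiset_count_of_subset p.parts (Icc 1 n) fun i hi => ?_).symm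
  rw [Multiset.mem_toFinset] at hi
  exact mem_Icc.mpr ⟨p.parts_pos hi, p.le_of_mem_parts hi⟩

theorem count_mul_le {n d : ℕ} (p : n.Partition) (hd : d ∈ Icc 1 n) :
    p.parts.count d * d ≤ n := by
  calc p.parts.count d * d ≤ ∑ i ∈ Icc 1 n, p.parts.count i * i :=
        single_le_sum (f := fun i => p.parts.count i * i) (fun i _ => Nat.zero_le _) hd
    _ = n := p.sum_count_mul_eq

theorem sum_count_eq {n d : ℕ} (hd : d ∈ Icc 1 n) :
    ∑ p : n.Partition, p.parts.count d =
      ∑ j ∈ Icc 1 (n / d), Fintype.card (n - d * j).Partition := by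
  have hd0 : 0 < d := (mem_Icc.mp hd).1
  rw [sum_eq_sum_Icc_card_filter_le _ _ fun p _ =>
    (Nat.le_div_iff_mul_le hd0).mpr (p.count_mul_le hd)]
  refine sum_congr rfl fun j hj => card_filter_le_count hd0 ?_
  exact (Nat.mul_le_mul_left d (mem_Icc.mp hj).2).trans (Nat.mul_div_le n d)

end Nat.Partition

theorem partition_sigma_recursion_general (n : ℕ) :
    n * Fintype.card (Nat.Partition n)
      = ∑ m ∈ Finset.Icc 1 n,
          (∑ d ∈ m.divisors, d) * Fintype.card (Nat.Partition (n - m)) := by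
  calc n * Fintype.card n.Partition
      = ∑ p : n.Partition, ∑ d ∈ Icc 1 n, p.parts.count d * d := by
        rw [sum_congr rfl fun p _ => p.sum_count_mul_eq, sum_const, card_univ, smul_eq_mul,
          mul_comm]
    _ = ∑ d ∈ Icc 1 n, ∑ j ∈ Icc 1 (n / d), Fintype.card (n - d * j).Partition * d := by
        rw [sum_comm]
        refine sum_congr rfl fun d hd => ?_
        rw [← sum_mul, ← sum_mul, Nat.Partition.sum_count_eq hd]
    _ = ∑ m ∈ Icc 1 n, ∑ d ∈ m.divisors, Fintype.card (n - m).Partition * d :=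
        (Nat.sum_Icc_sum_divisors n fun d m => Fintype.card (n - m).Partition * d).symm
    _ = _ := by simp only [mul_sum, mul_comm]

theorem partition_sigma_recursion (n : ℕ) (hn : 1 ≤ n) :
    n * Fintype.card (Nat.Partition n)
      = ∑ m ∈ Finset.Icc 1 n,
          (∑ d ∈ m.divisors, d) * Fintype.card (Nat.Partition (n - m)) :=
  partition_sigma_recursion_general n
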